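/- Let H = (V, E) be a hypergraph with hyperedges of size ≥ 2 and W(H) = ∑_{e ∈ E} U_e. Define D(H) = {S ⊆ V : |S| ≥ 2 and U_S ⊆ W(H)}. Then D(H) = {S ⊆ V : |S| ≥ 2 and S ⊆ e for some e ∈ E}. -/

import Mathlib

open Submodule Finset

variable {V : Type*} [Fintype V] [DecidableEq V]

/-- The set of nontrivial partitions `Π*(α)` of `α`, encoded as setoids different from `⊤`
(the one-block partition). -/
def NontrivPart (α : Type*) := {P : Setoid α // P ≠ ⊤}

/-- Restriction `P|_S` of a partition of `V` to a subset `S`: the partition of `S` whose blocks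
are the nonempty intersections of blocks of `P` with `S`. -/
def restrictS (S : Set V) (P : Setoid V) : Setoid ↥S := Setoid.comap Subtype.val P

open Classical in
/-- The indicator function `1_{S,π} : Π*(V) → ℝ`, equal to `1` at `P` iff `P|_S = π`. -/
noncomputable def ind (S : Set V) (π : Setoid ↥S) : NontrivPart V → ℝ :=
  fun P => if restrictS S P.1 = π then 1 else 0

/-- The subspace `U_S ⊆ ℝ^{Π*(V)}` spanned by the indicators `1_{S,π}` over nontrivial
partitions `π` of `S` (equal to `{0}` when `|S| ≤ 1`, since then no nontrivial `π` exists). -/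
noncomputable def U (S : Set V) : Submodule ℝ (NontrivPart V → ℝ) :=
  Submodule.span ℝ {f | ∃ π : Setoid ↥S, π ≠ ⊤ ∧ f = ind S π}

/-- Bell number `B n`: the number of partitions (setoids) of an `n`-element set. -/
noncomputable def bell (n : ℕ) : ℕ := Nat.card (Setoid (Fin n))

/-- Stirling number of the second kind `S(u,j)`: the number of partitions of a `u`-element set
into exactly `j` blocks. -/
noncomputable def stirling (u j : ℕ) : ℕ :=
  Nat.card {σ : Setoid (Fin u) // Nat.card (Quotient σ) = j}

/-!
If `S ⊆ e`, every `1_{S,π}` is a sum of indicators `1_{e,σ}`, so `U_S ≤ U_e`.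

Conversely, suppose `S` lies in no hyperedge. Colour `S` with three colours of weights
`1, 1, -2`, keep `V ∖ S` as one more block, and let `Φ f` be the weighted sum of `f` over the
resulting partitions. If a hyperedge `e` misses `z ∈ S`, then `1_{e,σ}` does not see the colour
of `z`, and summing over that colour kills `Φ` on `U_e` because the weights sum to zero. On the
other hand, for `π = {{p}, S ∖ {p}}` one finds `Φ 1_{S,π} = 2((-2)^{|S|-1} - 1) ≠ 0`.
-/

open Function

instance Setoid.instFinite {α : Type*} [Finite α] : Finite (Setoid α) :=
  Finite.of_injective (fun s : Setoid α => ⇑s) fun _ _ h => Setoid.eq_iff_rel_eq.2 h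

theorem Fintype.sum_prod_mul_eq_zero_of_update_invariant {ι κ R : Type*} [Fintype ι]
    [DecidableEq ι] [Fintype κ] [CommSemiring R] {w : κ → R} (hw : ∑ c, w c = 0) (z : ι)
    {D : (ι → κ) → R} (hD : ∀ g c, D (update g z c) = D g) :
    ∑ g : ι → κ, (∏ i, w (g i)) * D g = 0 := by
  cases isEmpty_or_nonempty κ
  · have : IsEmpty (ι → κ) := ⟨fun g => isEmptyElim (g z)⟩
    exact Finset.sum_of_isEmpty _
  obtain ⟨c₀⟩ := ‹Nonempty κ›
  let E := Equiv.funSplitAt z κ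
  have hterm (c g') : (∏ i, w (E.symm (c, g') i)) * D (E.symm (c, g')) =
      w c * ((∏ j : {j // j ≠ z}, w (g' j)) * D (E.symm (c₀, g'))) := by
    have hprod : ∏ i, w (E.symm (c, g') i) = w c * ∏ j : {j // j ≠ z}, w (g' j) := by
      rw [Fintype.prod_eq_mul_prod_subtype_ne _ z]
      exact congrArg₂ _ (by simp [E]) (Fintype.prod_congr _ _ fun j => by simp [E, j.2])
    have hsplit : E.symm (c, g') = update (E.symm (c₀, g')) z c := by
      ext i; by_cases hi : i = z <;> simp [E, hi]
    rw [hprod, hsplit, hD, mul_assoc]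
  simp only [← E.symm.sum_comp, Fintype.sum_prod_type, hterm, ← Finset.mul_sum,
    ← Finset.sum_mul, hw, zero_mul]

theorem Setoid.ker_eq_ker_eq_iff {ι κ : Type*} {p q : ι} (hqp : q ≠ p) (g : ι → κ) :
    Setoid.ker g = Setoid.ker (· = p) ↔ g p ≠ g q ∧ ∀ i ≠ p, g i = g q := by
  simp only [Setoid.ext_iff, Setoid.ker_def]
  constructor
  · intro h
    exact ⟨fun hpq => hqp (by simpa using (h p q).1 hpq),
      fun i hi => (h i q).2 (by simp [hi, hqp])⟩
  · rintro ⟨hpq, hrest⟩ i j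
    by_cases hi : i = p <;> by_cases hj : j = p <;> simp [hi, hj, hrest, hpq, Ne.symm hpq]

open Classical in
theorem sum_prod_of_ker_eq_ker_eq {ι κ R : Type*} [Fintype ι] [DecidableEq ι] [Fintype κ]
    [CommSemiring R] (w : κ → R) {p q : ι} (hqp : q ≠ p) :
    ∑ g : ι → κ with Setoid.ker g = Setoid.ker (· = p), ∏ i, w (g i) =
      ∑ c : κ × κ with c.1 ≠ c.2, w c.1 * w c.2 ^ (Fintype.card ι - 1) := by
  refine Finset.sum_nbij' (fun g => (g p, g q)) (fun c i => if i = p then c.1 else c.2)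
    ?_ ?_ ?_ ?_ ?_ <;> simp only [mem_filter, mem_univ, true_and, Setoid.ker_eq_ker_eq_iff hqp]
  · exact fun g hg => hg.1
  · intro c hc
    simp [hc, hqp]
  · intro g hg
    funext i
    by_cases hi : i = p <;> simp [hi, hg.2]
  · intro c _
    simp [hqp]
  · intro g hg
    rw [← Finset.mul_prod_erase univ _ (mem_univ p), Finset.prod_congr rfl fun i hi =>
      congrArg w (hg.2 i (Finset.ne_of_mem_erase hi)), Finset.prod_const,
      Finset.card_erase_of_mem (mem_univ p), Finset.card_univ]

noncomputable def colorWeight : Fin 3 → ℝ := ![1, 1, -2]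

theorem sum_colorWeight : ∑ c, colorWeight c = 0 := by
  norm_num [colorWeight, Fin.sum_univ_succ]

theorem sum_offDiag_colorWeight_ne_zero {m : ℕ} (hm : 1 ≤ m) :
    ∑ c : Fin 3 × Fin 3 with c.1 ≠ c.2, colorWeight c.1 * colorWeight c.2 ^ m ≠ 0 := by
  have hval : ∑ c : Fin 3 × Fin 3 with c.1 ≠ c.2, colorWeight c.1 * colorWeight c.2 ^ m =
      2 * ((-2) ^ m - 1) := by
    rw [Finset.sum_filter, Fintype.sum_prod_type]
    simp [Fin.sum_univ_three, colorWeight]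
    ring
  have hpow : (-2 : ℝ) ^ m ≠ 1 := by
    intro h
    have := congrArg abs h
    rw [abs_pow, abs_neg, abs_two, abs_one] at this
    exact (one_lt_pow₀ one_lt_two (by omega)).ne' this
  rw [hval]
  exact mul_ne_zero two_ne_zero (sub_ne_zero.2 hpow)

section Partitions

variable {α : Type*}

theorem restrictS_top (S : Set α) : restrictS S (⊤ : Setoid α) = ⊤ := rfl

theorem mem_U_of_factors_through_restrictS [Finite α] {e : Set α} (F : Setoid e → ℝ)
    (hF : F ⊤ = 0) :
    (fun P : NontrivPart α => F (restrictS e P.1)) ∈ U e := by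
  classical
  have := Fintype.ofFinite (Setoid e)
  have hsum : (fun P : NontrivPart α => F (restrictS e P.1)) = ∑ σ, F σ • ind e σ := by
    funext P
    simp [ind, Finset.sum_apply]
  rw [hsum]
  refine sum_mem fun σ _ => ?_
  by_cases hσ : σ = ⊤
  · simp [hσ, hF]
  · exact smul_mem _ _ (subset_span ⟨σ, hσ, rfl⟩)

theorem U_mono [Finite α] {S e : Set α} (h : S ⊆ e) : U S ≤ U e := by
  classical
  refine span_le.2 ?_
  rintro f ⟨π, hπ, rfl⟩
  exact mem_U_of_factors_through_restrictS
    (fun σ => if σ.comap (Set.inclusion h) = π then 1 else 0)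
    (if_neg fun h => hπ (h.symm.trans rfl))

open Classical in
/-- The partition of `α` whose blocks are the colour classes of `g` together with `Sᶜ`. -/
noncomputable def colorPartition {κ : Type*} (S : Set α) (g : S → κ) : Setoid α :=
  Setoid.ker fun x => if h : x ∈ S then some (g ⟨x, h⟩) else none

theorem restrictS_colorPartition {κ : Type*} (S : Set α) (g : S → κ) :
    restrictS S (colorPartition S g) = Setoid.ker g := by
  ext a b
  rw [restrictS, Setoid.comap_rel, colorPartition, Setoid.ker_def, Setoid.ker_def]
  simp [a.2, b.2]

theorem restrictS_colorPartition_update {κ : Type*} {S e : Set α} [DecidableEq S] {z : S}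
    (hz : (z : α) ∉ e) (g : S → κ) (c : κ) :
    restrictS e (colorPartition S (update g z c)) = restrictS e (colorPartition S g) := by
  classical
  have hagree : ∀ x ∈ e, (if h : x ∈ S then some (update g z c ⟨x, h⟩) else none) =
      if h : x ∈ S then some (g ⟨x, h⟩) else none := by
    intro x hx
    split_ifs with hS
    · rw [update_of_ne fun hxz => hz (congrArg Subtype.val hxz ▸ hx)]
    · rfl
  ext a b
  rw [restrictS, restrictS, Setoid.comap_rel, Setoid.comap_rel, colorPartition, colorPartition,
    Setoid.ker_def, Setoid.ker_def, hagree a a.2, hagree b b.2]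

open Classical in
noncomputable def evalNontriv (P : Setoid α) : (NontrivPart α → ℝ) →ₗ[ℝ] ℝ :=
  if h : P = ⊤ then 0 else LinearMap.proj (R := ℝ) (φ := fun _ => ℝ) ⟨P, h⟩

open Classical in
theorem evalNontriv_ind {T : Set α} {σ : Setoid T} (hσ : σ ≠ ⊤) (P : Setoid α) :
    evalNontriv P (ind T σ) = if restrictS T P = σ then 1 else 0 := by
  unfold evalNontriv
  split_ifs with hP h h
  · exact absurd (h.symm.trans (hP ▸ restrictS_top T)) hσ
  · rfl
  · exact if_pos h
  · exact if_neg h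

end Partitions

section Separation

variable {α : Type*} (S : Set α) [Fintype S] [DecidableEq S]

noncomputable def separatingFunctional : (NontrivPart α → ℝ) →ₗ[ℝ] ℝ :=
  ∑ g : S → Fin 3, (∏ s, colorWeight (g s)) • evalNontriv (colorPartition S g)

theorem separatingFunctional_apply (f : NontrivPart α → ℝ) :
    separatingFunctional S f =
      ∑ g : S → Fin 3, (∏ s, colorWeight (g s)) * evalNontriv (colorPartition S g) f := by
  simp [separatingFunctional, LinearMap.sum_apply]

variable {S}

theorem U_le_ker_separatingFunctional {e : Set α} (hSe : ¬ S ⊆ e) :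
    U e ≤ LinearMap.ker (separatingFunctional S) := by
  obtain ⟨z, hzS, hze⟩ := Set.not_subset.1 hSe
  refine span_le.2 ?_
  rintro f ⟨σ, hσ, rfl⟩
  simp only [SetLike.mem_coe, LinearMap.mem_ker, separatingFunctional_apply, evalNontriv_ind hσ]
  exact Fintype.sum_prod_mul_eq_zero_of_update_invariant sum_colorWeight ⟨z, hzS⟩ fun g c => by
    rw [restrictS_colorPartition_update hze]

theorem not_U_le_ker_separatingFunctional (hS : 2 ≤ Nat.card S) :
    ¬ U S ≤ LinearMap.ker (separatingFunctional S) := by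
  have : Nontrivial S := Finite.one_lt_card_iff_nontrivial.1 hS
  obtain ⟨q, p, hqp⟩ := exists_pair_ne S
  have hπ : Setoid.ker (· = p) ≠ ⊤ := fun h => hqp (by simpa using Setoid.eq_top_iff.1 h q p)
  have hval : separatingFunctional S (ind S (Setoid.ker (· = p))) =
      ∑ c : Fin 3 × Fin 3 with c.1 ≠ c.2,
        colorWeight c.1 * colorWeight c.2 ^ (Fintype.card S - 1) := by
    simp only [separatingFunctional_apply, evalNontriv_ind hπ, mul_ite, mul_one, mul_zero,
      ← Finset.sum_filter]
    convert sum_prod_of_ker_eq_ker_eq colorWeight hqp using 3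
    rw [restrictS_colorPartition]
  have hcard : 1 ≤ Fintype.card S - 1 := by rw [← Nat.card_eq_fintype_card]; omega
  intro hle
  have hzero := LinearMap.mem_ker.1 (hle (subset_span ⟨_, hπ, rfl⟩))
  rw [hval] at hzero
  exact sum_offDiag_colorWeight_ne_zero hcard hzero

end Separation

theorem stmt13_general (E : Set (Set V)) :
    {S : Set V | 2 ≤ Nat.card ↥S ∧ U S ≤ ⨆ e ∈ E, U e} =
      {S : Set V | 2 ≤ Nat.card ↥S ∧ ∃ e ∈ E, S ⊆ e} := by
  classical
  ext S
  simp only [Set.mem_ofPred_eq, and_congr_right_iff]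
  intro hS
  constructor
  · intro hU
    by_contra! hno
    exact not_U_le_ker_separatingFunctional hS
      (hU.trans (iSup₂_le fun e he => U_le_ker_separatingFunctional (hno e he)))
  · rintro ⟨e, he, hSe⟩
    exact (U_mono hSe).trans (le_iSup₂ (f := fun e _ => U e) e he)

/-- with `W(H) = ∑_{e ∈ E} U_e`, the collection
`D(H) = {S : |S| ≥ 2, U_S ⊆ W(H)}` equals `{S : |S| ≥ 2, S ⊆ e for some e ∈ E}`. -/
theorem stmt13 (E : Set (Set V)) (hEfin : E.Finite) (hE2 : ∀ e ∈ E, 2 ≤ Nat.card ↥e) :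
    {S : Set V | 2 ≤ Nat.card ↥S ∧ U S ≤ ⨆ e ∈ E, U e} =
      {S : Set V | 2 ≤ Nat.card ↥S ∧ ∃ e ∈ E, S ⊆ e} :=
  stmt13_general E
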